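/- arXiv:2512.22886 — 3 statements merged into one kernel-verified Lean document; each statement's English description precedes it below -/
import Mathlib

section
/- For all a, b ∈ [0,1], the inequality a·log(2a/(a+b)) + b·log(2b/(a+b)) ≥ (a−b)²/(2(a+b)) holds (with the convention 0·log 0 = 0 and the left side interpreted as 0 when a+b = 0). -/
/-!
Put `s = a + b` and `p = a / s`. Both sides are homogeneous of degree one in `(a, b)`, and after
dividing by `s` the claim becomes Pinsker's inequality against the fair coin,
`log 2 - H(p) ≥ 2 (p - 1/2)²`, with `H` the binary entropy. On `[1/2, 1]` the function
`H(p) + 2 (p - 1/2)²` has derivative `-(log (1 + x) - log (1 - x) - 2x)` with `x = 2p - 1`, which is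
nonpositive by the odd power series of `log (1 + x) - log (1 - x)`; so it is at most its value
`log 2` at `1/2`, and the symmetry `H(1 - p) = H(p)` covers `[0, 1/2]`.
-/

open Real Set

lemma two_mul_le_log_one_add_sub_log_one_sub {x : ℝ} (hx₀ : 0 ≤ x) (hx₁ : x < 1) :
    2 * x ≤ log (1 + x) - log (1 - x) := by
  have hsum := hasSum_log_sub_log_of_abs_lt_one (abs_lt.2 ⟨by linarith, hx₁⟩)
  simpa using le_hasSum hsum 0 fun k _ => by positivity

lemma antitoneOn_binEntropy_add_two_mul_sq :
    AntitoneOn (fun p => binEntropy p + 2 * (p - 2⁻¹) ^ 2) (Icc 2⁻¹ 1) := by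
  have hderiv : ∀ p ∈ interior (Icc (2⁻¹ : ℝ) 1), HasDerivAt
      (fun p => binEntropy p + 2 * (p - 2⁻¹) ^ 2) (log (1 - p) - log p + 4 * (p - 2⁻¹)) p := by
    rw [interior_Icc]
    rintro p ⟨hp₀, hp₁⟩
    refine ((hasDerivAt_binEntropy (by linarith) hp₁.ne).add
      ((((hasDerivAt_id p).sub_const 2⁻¹).pow 2).const_mul 2)).congr_deriv ?_
    simp only [id_eq]
    ring
  refine antitoneOn_of_deriv_nonpos (convex_Icc _ _) (by fun_prop)
    (fun p hp => (hderiv p hp).differentiableAt.differentiableWithinAt) fun p hp => ?_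
  rw [(hderiv p hp).deriv]
  rw [interior_Icc] at hp
  obtain ⟨hp₀, hp₁⟩ := hp
  have key := two_mul_le_log_one_add_sub_log_one_sub (x := 2 * p - 1) (by linarith) (by linarith)
  rw [show 1 + (2 * p - 1) = 2 * p by ring, show 1 - (2 * p - 1) = 2 * (1 - p) by ring,
    log_mul two_ne_zero (by linarith), log_mul two_ne_zero (by linarith)] at key
  linarith

lemma binEntropy_le_log_two_sub_two_mul_sq {p : ℝ} (hp₀ : 0 ≤ p) (hp₁ : p ≤ 1) :
    binEntropy p ≤ log 2 - 2 * (p - 2⁻¹) ^ 2 := by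
  wlog hp : 2⁻¹ ≤ p generalizing p
  · have := this (p := 1 - p) (by linarith) (by linarith) (by linarith)
    rw [binEntropy_one_sub] at this
    linarith
  have := antitoneOn_binEntropy_add_two_mul_sq ⟨le_rfl, by norm_num⟩ ⟨hp, hp₁⟩ hp
  simp only [binEntropy_two_inv, sub_self] at this
  linarith

lemma mul_log_two_mul (x : ℝ) : x * log (2 * x) = x * log 2 + x * log x := by
  rcases eq_or_ne x 0 with rfl | hx
  · simp
  · rw [log_mul two_ne_zero hx]
    ring

lemma log_two_sub_binEntropy (p : ℝ) :
    log 2 - binEntropy p = p * log (2 * p) + (1 - p) * log (2 * (1 - p)) := by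
  rw [mul_log_two_mul, mul_log_two_mul, binEntropy, log_inv, log_inv]
  ring

theorem stmt_3_general (a b : ℝ) (ha0 : 0 ≤ a) (hb0 : 0 ≤ b) :
    (a - b) ^ 2 / (2 * (a + b))
      ≤ a * Real.log (2 * a / (a + b)) + b * Real.log (2 * b / (a + b)) := by
  rcases (add_nonneg ha0 hb0).eq_or_lt with hs | hs
  · obtain ⟨rfl, rfl⟩ : a = 0 ∧ b = 0 := ⟨by linarith, by linarith⟩
    simp
  set s := a + b
  set p := a / s
  have ha : a = s * p := (mul_div_cancel₀ a hs.ne').symm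
  have hb : b = s * (1 - p) := by
    simp only [p, mul_sub, mul_one, mul_div_cancel₀ a hs.ne', s]
    ring
  have hpinsker := binEntropy_le_log_two_sub_two_mul_sq (p := p) (by positivity)
    (div_le_one_of_le₀ (by linarith) hs.le)
  have hkl := log_two_sub_binEntropy p
  calc (a - b) ^ 2 / (2 * s) = s * (2 * (p - 2⁻¹) ^ 2) := by
        rw [ha, hb]
        field_simp
        ring
    _ ≤ s * (p * log (2 * p) + (1 - p) * log (2 * (1 - p))) := by gcongr; linarith
    _ = a * log (2 * p) + b * log (2 * (1 - p)) := by
        rw [ha, hb]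
        ring
    _ = a * log (2 * a / s) + b * log (2 * b / s) := by
        rw [mul_div_assoc, mul_div_assoc, hb, mul_div_cancel_left₀ _ hs.ne']

/-- Pinsker-type inequality. -/
theorem stmt_3 (a b : ℝ) (ha0 : 0 ≤ a) (ha1 : a ≤ 1) (hb0 : 0 ≤ b) (hb1 : b ≤ 1) :
    (a - b) ^ 2 / (2 * (a + b))
      ≤ a * Real.log (2 * a / (a + b)) + b * Real.log (2 * b / (a + b)) :=
  stmt_3_general a b ha0 hb0
end

section
/- Fix p₁, p₂ ≥ 0 and S₁, S₂ > 0. The supremum over μ ∈ (−S₁, S₂) of p₁·(1/S₁ − 1/(S₂−μ)) + p₂·(1/S₂ − 1/(S₁+μ)) is attained at μ* = (√p₂·S₂ − √p₁·S₁)/(√p₁ + √p₂) (when this lies in the interval) and equals p₁/S₁ + p₂/S₂ − (√p₁ + √p₂)²/(S₁+S₂). -/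
/-- optimization step for the sum-exponential H-consistency bound. -/
theorem stmt_11 (p₁ p₂ S₁ S₂ : ℝ) (hp₁ : 0 ≤ p₁) (hp₂ : 0 ≤ p₂) (hp : 0 < p₁ * p₂)
    (hS₁ : 0 < S₁) (hS₂ : 0 < S₂) :
    (Real.sqrt p₂ * S₂ - Real.sqrt p₁ * S₁) / (Real.sqrt p₁ + Real.sqrt p₂)
        ∈ Set.Ioo (-S₁) S₂
    ∧ p₁ * (1 / S₁
          - 1 / (S₂ - (Real.sqrt p₂ * S₂ - Real.sqrt p₁ * S₁)
                        / (Real.sqrt p₁ + Real.sqrt p₂)))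
        + p₂ * (1 / S₂
          - 1 / (S₁ + (Real.sqrt p₂ * S₂ - Real.sqrt p₁ * S₁)
                        / (Real.sqrt p₁ + Real.sqrt p₂)))
      = p₁ / S₁ + p₂ / S₂ - (Real.sqrt p₁ + Real.sqrt p₂) ^ 2 / (S₁ + S₂)
    ∧ ∀ μ ∈ Set.Ioo (-S₁) S₂,
        p₁ * (1 / S₁ - 1 / (S₂ - μ)) + p₂ * (1 / S₂ - 1 / (S₁ + μ))
          ≤ p₁ / S₁ + p₂ / S₂ - (Real.sqrt p₁ + Real.sqrt p₂) ^ 2 / (S₁ + S₂) := by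
  have hp1 : 0 < p₁ := by nlinarith
  have hp2 : 0 < p₂ := by nlinarith
  set q₁ := Real.sqrt p₁ with hq₁def
  set q₂ := Real.sqrt p₂ with hq₂def
  have hq₁ : 0 < q₁ := Real.sqrt_pos.mpr hp1
  have hq₂ : 0 < q₂ := Real.sqrt_pos.mpr hp2
  have hsq₁ : q₁ ^ 2 = p₁ := Real.sq_sqrt hp₁
  have hsq₂ : q₂ ^ 2 = p₂ := Real.sq_sqrt hp₂
  have hqs : 0 < q₁ + q₂ := by linarith
  have hd₂ : S₂ - (q₂ * S₂ - q₁ * S₁) / (q₁ + q₂) = q₁ * (S₁ + S₂) / (q₁ + q₂) := by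
    field_simp; ring
  have hd₁ : S₁ + (q₂ * S₂ - q₁ * S₁) / (q₁ + q₂) = q₂ * (S₁ + S₂) / (q₁ + q₂) := by
    field_simp; ring
  refine ⟨⟨?_, ?_⟩, ?_, ?_⟩
  · rw [lt_div_iff₀ hqs]; nlinarith
  · rw [div_lt_iff₀ hqs]; nlinarith
  · rw [hd₂, hd₁, ← hsq₁, ← hsq₂]
    have h12 : 0 < S₁ + S₂ := by linarith
    field_simp
    ring
  · intro μ hμ
    obtain ⟨hμ₁, hμ₂⟩ := hμ
    have ha : 0 < S₂ - μ := by linarith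
    have hb : 0 < S₁ + μ := by linarith
    have hab : 0 < S₁ + S₂ := by linarith
    have key : (q₁ + q₂) ^ 2 / (S₁ + S₂) ≤ p₁ / (S₂ - μ) + p₂ / (S₁ + μ) := by
      rw [← hsq₁, ← hsq₂,
        div_add_div _ _ (ne_of_gt ha) (ne_of_gt hb), div_le_div_iff₀ hab (by positivity)]
      nlinarith [sq_nonneg (q₁ * (S₁ + μ) - q₂ * (S₂ - μ))]
    have e : p₁ * (1 / S₁ - 1 / (S₂ - μ)) + p₂ * (1 / S₂ - 1 / (S₁ + μ))
        = p₁ / S₁ + p₂ / S₂ - (p₁ / (S₂ - μ) + p₂ / (S₁ + μ)) := by ring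
    rw [e]; linarith
end

section
/- Let H be a hypothesis class and R a class of rejectors r : X → ℝ, let c ∈ (0,1), and let p(·|x) be a conditional probability over labels Y. Suppose R is regular for abstention at x (contains both an accepting and a rejecting function at x). Then the minimal conditional predictor-rejector abstention risk is C*(H,R,x) = 1 − max{max_{y∈H(x)} p(y|x), 1−c}, and the calibration gap of (h,r) equals max{max_{y∈H(x)} p(y|x), 1−c} − p(ĥ(x)|x) when r(x) > 0, and max{max_{y∈H(x)} p(y|x) − 1 + c, 0} when r(x) ≤ 0. -/
/-- minimal conditional predictor-rejector abstention risk and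
calibration gap. -/
theorem stmt_14 (n : ℕ) (p : ℕ → ℝ) (c : ℝ) (hc0 : 0 < c) (hc1 : c < 1)
    (hp0 : ∀ y ∈ Finset.Icc 1 n, 0 ≤ p y)
    (hsum : ∑ y ∈ Finset.Icc 1 n, p y = 1)
    (Hx : Finset ℕ) (hHx : Hx ⊆ Finset.Icc 1 n) (hne : Hx.Nonempty)
    (R : Set ℝ) (hacc : ∃ t ∈ R, 0 < t) (hrej : ∃ t ∈ R, t ≤ 0)
    (hhat : ℕ) (hmem : hhat ∈ Hx) (rx : ℝ) (hrx : rx ∈ R) :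
    sInf {v : ℝ | ∃ k ∈ Hx, ∃ t ∈ R, v = if 0 < t then 1 - p k else c}
        = 1 - max (Hx.sup' hne p) (1 - c)
    ∧ (0 < rx →
        (1 - p hhat) - (1 - max (Hx.sup' hne p) (1 - c))
          = max (Hx.sup' hne p) (1 - c) - p hhat)
    ∧ (rx ≤ 0 →
        c - (1 - max (Hx.sup' hne p) (1 - c))
          = max (Hx.sup' hne p - 1 + c) 0) := by
  obtain ⟨ta, hta, hta0⟩ := hacc
  obtain ⟨tr, htr, htr0⟩ := hrej
  refine ⟨?_, fun _ => by ring, fun _ => ?_⟩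
  · apply IsLeast.csInf_eq
    constructor
    · rcases le_total (Hx.sup' hne p) (1 - c) with h | h
      · refine ⟨hhat, hmem, tr, htr, ?_⟩
        rw [if_neg (not_lt.mpr htr0), max_eq_right h]
        ring
      · obtain ⟨k, hk, hkq⟩ := Finset.exists_mem_eq_sup' hne p
        refine ⟨k, hk, ta, hta, ?_⟩
        rw [if_pos hta0, max_eq_left h, hkq]
    · rintro v ⟨k, hk, t, ht, rfl⟩
      split_ifs with h
      · have : p k ≤ Hx.sup' hne p := Finset.le_sup' p hk
        have := le_max_left (Hx.sup' hne p) (1 - c)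
        linarith [Finset.le_sup' p hk]
      · have := le_max_right (Hx.sup' hne p) (1 - c)
        linarith
  · rcases le_total (Hx.sup' hne p) (1 - c) with h | h
    · rw [max_eq_right h, max_eq_right (by linarith : Hx.sup' hne p - 1 + c ≤ 0)]
      ring
    · rw [max_eq_left h, max_eq_left (by linarith : (0:ℝ) ≤ Hx.sup' hne p - 1 + c)]
      ring
end
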